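/- arXiv:2111.00225 — 4 statements merged into one kernel-verified Lean document; each statement's English description precedes it below -/
import Mathlib

section
/- Assume additionally that N₀ − z₀ is not boundedly invertible and that the operator-valued function v ↦ R(v) is meromorphic at v = 0. Then the function v ↦ R(v) ∘ W is also meromorphic at v = 0, both functions have a pole at v = 0 (negative meromorphic order), and the meromorphic order of v ↦ R(v) at 0 is equal to the meromorphic order of v ↦ R(v) ∘ W at 0. -/
/-!
Near `0` the resolvent `R` is the two-sided inverse of the affine pencil `X v = X₀ + v • W`,
where `X₀ = N₀ - z₀` is not invertible. A removable singularity at `0` would make the limit of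
`R` an inverse of `X₀`, so `R` has a pole: `R v = v ^ m • g v` with `m < 0`, `g` analytic and
`g 0 ≠ 0`. Since `g v * X v = v ^ (-m) → 0`, the leading coefficient satisfies `g 0 * X₀ = 0`;
if also `g 0 * W = 0`, then `g 0` would annihilate the invertible `X v`, so `g 0 * W ≠ 0` and
`R v * W = v ^ m • (g v * W)` has the same order `m`.
-/

open Filter Topology

theorem ContinuousAt.eq_of_eventuallyEq_nhdsNE {X Y : Type*} [TopologicalSpace X]
    [TopologicalSpace Y] [T2Space Y] {x : X} [(𝓝[≠] x).NeBot] {f g : X → Y}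
    (hf : ContinuousAt f x) (hg : ContinuousAt g x) (hfg : f =ᶠ[𝓝[≠] x] g) : f x = g x :=
  ((hf.eventuallyEq_nhds_iff_eventuallyEq_nhdsNE hg).mp hfg).eq_of_nhds

section

variable {𝕜 A : Type*} [NontriviallyNormedField 𝕜] [NormedRing A] [NormedAlgebra 𝕜 A]
  {f g X : 𝕜 → A} {x : 𝕜}

theorem MeromorphicAt.mul_const (hf : MeromorphicAt f x) (W : A) :
    MeromorphicAt (fun y => f y * W) x := by
  convert hf.const_smul (MulOpposite.op W) using 1
  ext y
  simp

theorem meromorphicOrderAt_neg_of_eventually_inverse_of_not_isUnit (hf : MeromorphicAt f x)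
    (hX : ContinuousAt X x) (hinv : ∀ᶠ y in 𝓝[≠] x, X y * f y = 1 ∧ f y * X y = 1)
    (hXx : ¬ IsUnit (X x)) : meromorphicOrderAt f x < 0 := by
  by_contra! hnonneg
  obtain ⟨g, hg, hfg⟩ := hf.meromorphicOrderAt_nonneg_iff.mp hnonneg
  have hXg : X x * g x = 1 :=
    (hX.mul hg.continuousAt).eq_of_eventuallyEq_nhdsNE continuousAt_const
    (by filter_upwards [hinv, hfg] with y hy hfy; rw [Pi.mul_apply, ← hfy, hy.1])
  have hgX : g x * X x = 1 :=
    (hg.continuousAt.mul hX).eq_of_eventuallyEq_nhdsNE continuousAt_const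
    (by filter_upwards [hinv, hfg] with y hy hfy; rw [Pi.mul_apply, ← hfy, hy.2])
  exact hXx ⟨⟨X x, g x, hXg, hgX⟩, rfl⟩

theorem meromorphicOrderAt_mul_const_eq_of_mul_ne_zero (hf : MeromorphicAt f x) {m : ℤ}
    (hg : AnalyticAt 𝕜 g x) (hfg : ∀ᶠ y in 𝓝[≠] x, f y = (y - x) ^ m • g y) {W : A}
    (hW : g x * W ≠ 0) : meromorphicOrderAt (fun y => f y * W) x = m := by
  refine (meromorphicOrderAt_eq_int_iff (hf.mul_const W)).mpr
    ⟨fun y => g y * W, hg.mul analyticAt_const, hW, ?_⟩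
  filter_upwards [hfg] with y hy
  rw [hy, smul_mul_assoc]

theorem mul_eq_zero_of_eventually_mul_eq_one {m : ℤ} (hm : m < 0)
    (hg : ContinuousAt g x) (hfg : ∀ᶠ y in 𝓝[≠] x, f y = (y - x) ^ m • g y)
    (hX : ContinuousAt X x) (hinv : ∀ᶠ y in 𝓝[≠] x, f y * X y = 1) : g x * X x = 0 := by
  lift -m to ℕ using by omega with n hn
  have hgX : g * X =ᶠ[𝓝[≠] x] fun y => (y - x) ^ n • (1 : A) := by
    filter_upwards [hfg, hinv, self_mem_nhdsWithin] with y hfy hy hyx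
    rw [Pi.mul_apply, ← hy, hfy, smul_mul_assoc, smul_smul, ← zpow_natCast, hn,
      ← zpow_add₀ (sub_ne_zero.mpr hyx), neg_add_cancel, zpow_zero, one_smul]
  simpa [show n ≠ 0 by omega] using (hg.mul hX).eq_of_eventuallyEq_nhdsNE (by fun_prop) hgX

theorem meromorphicOrderAt_mul_const_eq_of_eventually_inverse_affine (hf : MeromorphicAt f x)
    {X₀ W : A} (hinv : ∀ᶠ y in 𝓝[≠] x,
      (X₀ + (y - x) • W) * f y = 1 ∧ f y * (X₀ + (y - x) • W) = 1)
    (hneg : meromorphicOrderAt f x < 0) :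
    meromorphicOrderAt (fun y => f y * W) x = meromorphicOrderAt f x := by
  obtain ⟨m, hm⟩ := WithTop.ne_top_iff_exists.mp hneg.ne_top
  obtain ⟨g, hg, hgx, hfg⟩ := (meromorphicOrderAt_eq_int_iff hf).mp hm.symm
  have hm0 : m < 0 := by exact_mod_cast hm ▸ hneg
  have hgX₀ : g x * X₀ = 0 := by
    simpa using mul_eq_zero_of_eventually_mul_eq_one hm0 hg.continuousAt hfg
      (by fun_prop) (hinv.mono fun _ h => h.2)
  rw [← hm, meromorphicOrderAt_mul_const_eq_of_mul_ne_zero hf hg hfg]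
  intro hgW
  obtain ⟨y, hy, -⟩ := hinv.exists
  apply hgx
  calc g x = g x * ((X₀ + (y - x) • W) * f y) := by rw [hy, mul_one]
    _ = (g x * X₀ + (y - x) • (g x * W)) * f y := by rw [← mul_assoc, mul_add, mul_smul_comm]
    _ = 0 := by rw [hgX₀, hgW, smul_zero, zero_add, zero_mul]

end

theorem resolvent_and_resolvent_comp_perturbation_same_pole_order_general
    {H : Type*} [NormedAddCommGroup H] [InnerProductSpace ℂ H]
    (N₀ W : H →L[ℂ] H) (z₀ : ℂ) (r : ℝ) (hr : 0 < r)
    (R : ℂ → (H →L[ℂ] H))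
    (hR : ∀ v : ℂ, v ≠ 0 → ‖v‖ ≤ r →
      (N₀ + v • W - z₀ • (1 : H →L[ℂ] H)) * R v = 1 ∧
      R v * (N₀ + v • W - z₀ • (1 : H →L[ℂ] H)) = 1)
    (hsing : ¬ IsUnit (N₀ - z₀ • (1 : H →L[ℂ] H)))
    (hmero : MeromorphicAt R 0) :
    ∃ hmero' : MeromorphicAt (fun v => R v * W) 0,
      meromorphicOrderAt R 0 < 0 ∧ meromorphicOrderAt (fun v => R v * W) 0 < 0 ∧
        meromorphicOrderAt R 0 = meromorphicOrderAt (fun v => R v * W) 0 := by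
  have hinv : ∀ᶠ v in 𝓝[≠] (0 : ℂ),
      (N₀ - z₀ • 1 + (v - 0) • W) * R v = 1 ∧ R v * (N₀ - z₀ • 1 + (v - 0) • W) = 1 := by
    filter_upwards [nhdsWithin_le_nhds (Metric.closedBall_mem_nhds 0 hr), self_mem_nhdsWithin]
      with v hv hv0
    rw [sub_zero, sub_add_eq_add_sub]
    exact hR v hv0 (by simpa using hv)
  have hneg : meromorphicOrderAt R 0 < 0 :=
    meromorphicOrderAt_neg_of_eventually_inverse_of_not_isUnit hmero (by fun_prop) hinv
      (by simpa using hsing)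
  have heq := meromorphicOrderAt_mul_const_eq_of_eventually_inverse_affine hmero hinv hneg
  exact ⟨hmero.mul_const W, hneg, heq ▸ hneg, heq.symm⟩

/-- If `N₀ - z₀` is not boundedly invertible and the resolvent
`v ↦ R v = (N₀ + v W - z₀)⁻¹` (defined on a punctured disc of radius `r`) is meromorphic
at `v = 0`, then `v ↦ R v ∘ W` is also meromorphic at `0`, both have a pole at `0`
(negative meromorphic order), and their meromorphic orders at `0` coincide. -/
theorem resolvent_and_resolvent_comp_perturbation_same_pole_order
    {H : Type*} [NormedAddCommGroup H] [InnerProductSpace ℂ H] [CompleteSpace H]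
    (N₀ W : H →L[ℂ] H) (z₀ : ℂ) (r : ℝ) (hr : 0 < r)
    (R : ℂ → (H →L[ℂ] H))
    (hR : ∀ v : ℂ, v ≠ 0 → ‖v‖ ≤ r →
      (N₀ + v • W - z₀ • (1 : H →L[ℂ] H)) * R v = 1 ∧
      R v * (N₀ + v • W - z₀ • (1 : H →L[ℂ] H)) = 1)
    (hsing : ¬ IsUnit (N₀ - z₀ • (1 : H →L[ℂ] H)))
    (hmero : MeromorphicAt R 0) :
    ∃ hmero' : MeromorphicAt (fun v => R v * W) 0,
      meromorphicOrderAt R 0 < 0 ∧ meromorphicOrderAt (fun v => R v * W) 0 < 0 ∧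
        meromorphicOrderAt R 0 = meromorphicOrderAt (fun v => R v * W) 0 :=
  resolvent_and_resolvent_comp_perturbation_same_pole_order_general N₀ W z₀ r hr R hR hsing hmero
end

section
/- For all integers k, j ≥ 0 one has K₋ₖ ∘ W ∘ K₋ⱼ = K₋ₖ₋ⱼ. -/
/-!
With `R` inverting `N₀ + vW - z₀`, the difference `(N_u - z₀) - (N_v - z₀) = (u - v) W` gives the
resolvent identity `R(u) W R(v) = (u - v)⁻¹ (R(v) - R(u))`. Compute `K₋ₖ` on the circle `|u| = r`
and, by Cauchy's theorem on the annulus, `K₋ⱼ` on a smaller circle `|v| = ρ`. The product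
`K₋ₖ W K₋ⱼ` becomes a double integral of `uᵏ vʲ (u - v)⁻¹ (R(v) - R(u))`. The `R(u)` part dies in
the `v`-integral, because `v ↦ vʲ (u - v)⁻¹` is holomorphic on `|v| ≤ ρ`; in the `R(v)` part one
integrates over `u` first and the Cauchy integral formula yields `2πi vᵏ⁺ʲ`.
-/

open Complex MeasureTheory

/-- The `j`-th Laurent coefficient `K_j = (2πi)⁻¹ ∮_{|v|=r} v^(-j) R(v) dv` of the
resolvent function `R`. -/
noncomputable def laurentK {H : Type*} [NormedAddCommGroup H] [NormedSpace ℂ H]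
    (R : ℂ → (H →L[ℂ] H)) (r : ℝ) (j : ℤ) : H →L[ℂ] H :=
  (2 * (Real.pi : ℂ) * Complex.I)⁻¹ • ∮ v in C(0, r), v ^ (-j) • R v

open Metric Set Function Real

section CircleIntegral

variable {E F : Type*} [NormedAddCommGroup E] [NormedSpace ℂ E]
  [NormedAddCommGroup F] [NormedSpace ℂ F]

theorem ContinuousLinearMap.circleIntegral_comp_comm [CompleteSpace E] [CompleteSpace F]
    (L : E →L[ℂ] F) {f : ℂ → E} {c : ℂ} {R : ℝ} (hf : CircleIntegrable f c R) :
    ∮ z in C(c, R), L (f z) = L (∮ z in C(c, R), f z) := by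
  simp only [circleIntegral, ← L.map_smul]
  exact L.intervalIntegral_comp_comm hf.out

theorem circleIntegral_circleIntegral_swap {f : ℂ → ℂ → E} {c₁ c₂ : ℂ} {R₁ R₂ : ℝ}
    (hf : ContinuousOn (uncurry f) (sphere c₁ |R₁| ×ˢ sphere c₂ |R₂|)) :
    ∮ z in C(c₁, R₁), ∮ w in C(c₂, R₂), f z w = ∮ w in C(c₂, R₂), ∮ z in C(c₁, R₁), f z w := by
  simp only [circleIntegral, ← intervalIntegral.integral_smul]
  rw [intervalIntegral_intervalIntegral_swap (F := fun θ φ => deriv (circleMap c₁ R₁) θ •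
    deriv (circleMap c₂ R₂) φ • f (circleMap c₁ R₁ θ) (circleMap c₂ R₂ φ))]
  · simp only [smul_comm (deriv (circleMap c₁ R₁) _)]
  have hcont : Continuous fun p : ℝ × ℝ => deriv (circleMap c₁ R₁) p.1 •
      deriv (circleMap c₂ R₂) p.2 • f (circleMap c₁ R₁ p.1) (circleMap c₂ R₂ p.2) := by
    simp only [deriv_circleMap]
    refine (by fun_prop : Continuous fun p : ℝ × ℝ => circleMap 0 R₁ p.1 * I).smul
      ((by fun_prop : Continuous fun p : ℝ × ℝ => circleMap 0 R₂ p.2 * I).smul ?_)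
    exact hf.comp_continuous (f := fun p : ℝ × ℝ => (circleMap c₁ R₁ p.1, circleMap c₂ R₂ p.2))
      (by fun_prop) fun p => ⟨circleMap_mem_sphere' c₁ R₁ p.1, circleMap_mem_sphere' c₂ R₂ p.2⟩
  exact (hcont.continuousOn.integrableOn_compact (isCompact_uIcc.prod isCompact_uIcc)).mono_set
    (prod_mono uIoc_subset_uIcc uIoc_subset_uIcc)

theorem circleIntegral_eq_of_differentiableOn_annulus {f : ℂ → E} {c : ℂ} {r R : ℝ}
    (h0 : 0 < r) (hle : r ≤ R) (hf : DifferentiableOn ℂ f (closedBall c R \ ball c r)) :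
    ∮ z in C(c, R), f z = ∮ z in C(c, r), f z :=
  circleIntegral_eq_of_differentiable_on_annulus_off_countable h0 hle countable_empty
    hf.continuousOn fun _ hz => hf.differentiableAt <| mem_nhds_iff.2
      ⟨ball c R \ closedBall c r, sdiff_subset_sdiff ball_subset_closedBall ball_subset_closedBall,
        isOpen_ball.sdiff isClosed_closedBall, hz.1⟩

theorem circleIntegral_inv_sub_mul_eq_zero {f : ℂ → ℂ} {c u : ℂ} {R : ℝ} (hR : 0 ≤ R)
    (hf : DifferentiableOn ℂ f (closedBall c R)) (hu : u ∉ closedBall c R) :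
    ∮ z in C(c, R), (u - z)⁻¹ * f z = 0 :=
  ((((differentiableOn_const u).sub differentiableOn_id).inv fun _ hz =>
    sub_ne_zero.2 (ne_of_mem_of_not_mem hz hu).symm).mul hf).mono closure_ball_subset_closedBall
    |>.diffContOnCl.circleIntegral_eq_zero hR

noncomputable def circleMoment (F : ℂ → E) (r : ℝ) (m : ℕ) : E :=
  ∮ v in C(0, r), v ^ m • F v

theorem circleIntegral_circleIntegral_inv_sub_mul_smul [CompleteSpace E] {G : ℂ → E} {r ρ : ℝ}
    (hρ : 0 ≤ ρ) (hρr : ρ < r) (hG : ContinuousOn G (sphere 0 ρ)) (k j : ℕ) :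
    ∮ u in C(0, r), ∮ v in C(0, ρ), ((u - v)⁻¹ * (u ^ k * v ^ j)) • G v =
      (2 * π * I) • circleMoment G ρ (k + j) := by
  have hr : 0 ≤ r := hρ.trans hρr.le
  rw [circleIntegral_circleIntegral_swap]
  · refine (circleIntegral.integral_congr hρ fun v hv => ?_).trans
      (circleIntegral.integral_smul _ _ _ _)
    have hcauchy : ∮ u in C(0, r), (u - v)⁻¹ * (u ^ k * v ^ j) = 2 * π * I * (v ^ k * v ^ j) :=
      (by fun_prop : Differentiable ℂ fun u : ℂ => u ^ k * v ^ j).differentiableOn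
        |>.circleIntegral_sub_inv_smul (sphere_subset_ball hρr hv)
    rw [circleIntegral.integral_smul_const, hcauchy, mul_smul, pow_add]
  rw [abs_of_nonneg hr, abs_of_nonneg hρ]
  refine (ContinuousOn.mul ?_ (by fun_prop)).smul (hG.comp continuousOn_snd fun p hp => hp.2)
  exact (continuousOn_fst.sub continuousOn_snd).inv₀ fun p hp =>
    sub_ne_zero.2 (sphere_disjoint_ball.ne_of_mem hp.1 (sphere_subset_ball hρr hp.2))

end CircleIntegral

section Algebra

variable {𝔸 : Type*} [NormedRing 𝔸] [NormedAlgebra ℂ 𝔸]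

theorem circleIntegral_mul_mul_circleIntegral [CompleteSpace 𝔸] {f g : ℂ → 𝔸} {c₁ c₂ : ℂ}
    {R₁ R₂ : ℝ} (hf : CircleIntegrable f c₁ R₁) (hg : CircleIntegrable g c₂ R₂) (a : 𝔸) :
    (∮ z in C(c₁, R₁), f z) * a * (∮ w in C(c₂, R₂), g w) =
      ∮ z in C(c₁, R₁), ∮ w in C(c₂, R₂), f z * a * g w := by
  have hf' :=
    ((ContinuousLinearMap.mul ℂ 𝔸).flip (a * ∮ w in C(c₂, R₂), g w)).circleIntegral_comp_comm hf
  have hg' := fun z => (ContinuousLinearMap.mul ℂ 𝔸 (f z * a)).circleIntegral_comp_comm hg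
  simp only [ContinuousLinearMap.flip_apply, ContinuousLinearMap.mul_apply'] at hf' hg'
  rw [mul_assoc, ← hf']
  congr 1 with z
  rw [← mul_assoc, ← hg']

def IsResolventOn (N₀ W : 𝔸) (z₀ : ℂ) (R : ℂ → 𝔸) (s : Set ℂ) : Prop :=
  ∀ v ∈ s, (N₀ + v • W - z₀ • 1) * R v = 1 ∧ R v * (N₀ + v • W - z₀ • 1) = 1

variable {N₀ W : 𝔸} {z₀ : ℂ} {R : ℂ → 𝔸} {s : Set ℂ}

theorem IsResolventOn.mul_mul_eq_inv_smul_sub (hR : IsResolventOn N₀ W z₀ R s) {u v : ℂ}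
    (hu : u ∈ s) (hv : v ∈ s) (huv : u ≠ v) :
    R u * W * R v = (u - v)⁻¹ • (R v - R u) := by
  rw [eq_inv_smul_iff₀ (sub_ne_zero.2 huv)]
  calc (u - v) • (R u * W * R v)
      = R u * ((N₀ + u • W - z₀ • 1) - (N₀ + v • W - z₀ • 1)) * R v := by
        rw [show (N₀ + u • W - z₀ • 1) - (N₀ + v • W - z₀ • 1) = (u - v) • W by module,
          mul_smul_comm, smul_mul_assoc]
    _ = R u * (N₀ + u • W - z₀ • 1) * R v - R u * ((N₀ + v • W - z₀ • 1) * R v) := by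
        noncomm_ring
    _ = R v - R u := by rw [(hR u hu).2, (hR v hv).1, one_mul, mul_one]

theorem IsResolventOn.differentiableOn [CompleteSpace 𝔸] (hR : IsResolventOn N₀ W z₀ R s) :
    DifferentiableOn ℂ R s := by
  have hA : Differentiable ℂ fun v : ℂ => N₀ + v • W - z₀ • (1 : 𝔸) := by fun_prop
  have hinv : ∀ v ∈ s, R v = Ring.inverse (N₀ + v • W - z₀ • 1) := fun v hv =>
    (Ring.inverse_unit ⟨_, R v, (hR v hv).1, (hR v hv).2⟩).symm
  intro v hv
  exact ((hA v).inverse ⟨⟨_, R v, (hR v hv).1, (hR v hv).2⟩, rfl⟩).differentiableWithinAt.congr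
    hinv (hinv v hv)

theorem circleMoment_mul_mul_circleMoment [CompleteSpace 𝔸] {F : ℂ → 𝔸} {W : 𝔸} {r ρ : ℝ}
    (hρ : 0 ≤ ρ) (hρr : ρ < r) (hFr : ContinuousOn F (sphere 0 r))
    (hFρ : ContinuousOn F (sphere 0 ρ))
    (hres : ∀ u ∈ sphere (0 : ℂ) r, ∀ v ∈ sphere (0 : ℂ) ρ,
      F u * W * F v = (u - v)⁻¹ • (F v - F u)) (k j : ℕ) :
    circleMoment F r k * W * circleMoment F ρ j = (2 * π * I) • circleMoment F ρ (k + j) := by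
  have hr : 0 ≤ r := hρ.trans hρr.le
  have hsplit : ∀ u ∈ sphere (0 : ℂ) r, ∀ v ∈ sphere (0 : ℂ) ρ,
      u ^ k • F u * W * (v ^ j • F v) =
        ((u - v)⁻¹ * (u ^ k * v ^ j)) • F v - ((u - v)⁻¹ * (u ^ k * v ^ j)) • F u :=
    fun u hu v hv => by
      rw [smul_mul_assoc, smul_mul_assoc, mul_smul_comm, hres u hu v hv, smul_smul, smul_smul,
        mul_comm _ (u - v)⁻¹, smul_sub]
  calc circleMoment F r k * W * circleMoment F ρ j
      = ∮ u in C(0, r), ∮ v in C(0, ρ), u ^ k • F u * W * (v ^ j • F v) :=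
        circleIntegral_mul_mul_circleIntegral (((continuousOn_pow k).smul hFr).circleIntegrable hr)
          (((continuousOn_pow j).smul hFρ).circleIntegrable hρ) W
    _ = ∮ u in C(0, r), ∮ v in C(0, ρ), ((u - v)⁻¹ * (u ^ k * v ^ j)) • F v := by
        refine circleIntegral.integral_congr hr fun u hu => ?_
        have hkernel : ContinuousOn (fun v => (u - v)⁻¹ * (u ^ k * v ^ j)) (sphere 0 ρ) :=
          ((continuousOn_const.sub continuousOn_id).inv₀ fun v hv => sub_ne_zero.2
            (sphere_disjoint_ball.ne_of_mem hu (sphere_subset_ball hρr hv))).mul (by fun_prop)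
        rw [circleIntegral.integral_congr hρ (hsplit u hu), circleIntegral.integral_sub
          ((hkernel.fun_smul hFρ).circleIntegrable hρ)
          ((hkernel.fun_smul continuousOn_const).circleIntegrable hρ),
          circleIntegral.integral_smul_const, circleIntegral_inv_sub_mul_eq_zero hρ (by fun_prop)
            (sphere_disjoint_ball.notMem_of_mem_left hu <| closedBall_subset_ball hρr ·),
          zero_smul, sub_zero]
    _ = (2 * π * I) • circleMoment F ρ (k + j) :=
        circleIntegral_circleIntegral_inv_sub_mul_smul hρ hρr hFρ k j

end Algebra

theorem laurentK_neg_natCast {H : Type*} [NormedAddCommGroup H] [NormedSpace ℂ H]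
    (R : ℂ → (H →L[ℂ] H)) (r : ℝ) (m : ℕ) :
    laurentK R r (-m) = (2 * π * I)⁻¹ • circleMoment R r m := by
  simp [laurentK, circleMoment]

/-- For all integers `k, j ≥ 0` one has `K₋ₖ ∘ W ∘ K₋ⱼ = K₋ₖ₋ⱼ`. -/
theorem laurentK_neg_comp_perturbation_comp_laurentK_neg
    {H : Type*} [NormedAddCommGroup H] [InnerProductSpace ℂ H] [CompleteSpace H]
    (N₀ W : H →L[ℂ] H) (z₀ : ℂ) (r : ℝ) (hr : 0 < r)
    (R : ℂ → (H →L[ℂ] H))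
    (hR : ∀ v : ℂ, v ≠ 0 → ‖v‖ ≤ r →
      (N₀ + v • W - z₀ • (1 : H →L[ℂ] H)) * R v = 1 ∧
      R v * (N₀ + v • W - z₀ • (1 : H →L[ℂ] H)) = 1)
    (k j : ℤ) (hk : 0 ≤ k) (hj : 0 ≤ j) :
    laurentK R r (-k) * W * laurentK R r (-j) = laurentK R r (-k - j) := by
  lift k to ℕ using hk
  lift j to ℕ using hj
  have hρ : 0 < r / 2 := half_pos hr
  have hρr : r / 2 < r := half_lt_self hr
  have hRs : IsResolventOn N₀ W z₀ R (closedBall 0 r \ ball 0 (r / 2)) := fun v hv =>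
    hR v (fun hv0 => hv.2 (hv0 ▸ mem_ball_self hρ)) (mem_closedBall_zero_iff.1 hv.1)
  have hsphere : ∀ s ∈ Icc (r / 2) r, sphere (0 : ℂ) s ⊆ closedBall 0 r \ ball 0 (r / 2) :=
    fun s hs => closedBall_sdiff_ball (x := (0 : ℂ)) ▸
      sdiff_subset_sdiff (closedBall_subset_closedBall hs.2) (ball_subset_ball hs.1)
  have hshift (m : ℕ) : circleMoment R r m = circleMoment R (r / 2) m :=
    circleIntegral_eq_of_differentiableOn_annulus hρ hρr.le
      ((differentiableOn_pow m).smul hRs.differentiableOn)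
  have hprod := circleMoment_mul_mul_circleMoment hρ.le hρr
    (hRs.differentiableOn.continuousOn.mono (hsphere r ⟨hρr.le, le_rfl⟩))
    (hRs.differentiableOn.continuousOn.mono (hsphere (r / 2) ⟨le_rfl, hρr.le⟩))
    (fun u hu v hv => hRs.mul_mul_eq_inv_smul_sub (hsphere r ⟨hρr.le, le_rfl⟩ hu)
      (hsphere (r / 2) ⟨le_rfl, hρr.le⟩ hv)
      (sphere_disjoint_ball.ne_of_mem hu (sphere_subset_ball hρr hv))) k j
  rw [show -(k : ℤ) - j = -((k + j : ℕ) : ℤ) by push_cast; ring, laurentK_neg_natCast,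
    laurentK_neg_natCast, laurentK_neg_natCast, hshift j, hshift (k + j), smul_mul_assoc,
    smul_mul_assoc, mul_smul_comm, hprod, smul_smul, smul_smul,
    inv_mul_cancel_right₀ two_pi_I_ne_zero]
end

section
/- Let D ⊆ ℂ be open and connected, let z_τ, z_μ : D → ℂ be holomorphic functions which are not identically equal, and let φ_τ, φ*_μ : D → ℋ be continuous functions satisfying N_v φ_τ(v) = z_τ(v) φ_τ(v) and N_v* φ*_μ(v) = conj(z_μ(v)) φ*_μ(v) for all v ∈ D. Then ⟨φ*_μ(v), φ_τ(v)⟩ = 0 for every v ∈ D. -/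
/-!
Pairing the two eigenvalue equations through the adjoint gives
`(z_τ(v) - z_μ(v)) ⟪φ*_μ(v), φ_τ(v)⟫ = 0` at every `v ∈ D`. Since `z_τ - z_μ` is holomorphic and
not identically zero on the connected open set `D`, its zeros are isolated, so the continuous
function `v ↦ ⟪φ*_μ(v), φ_τ(v)⟫` vanishes on a punctured neighbourhood of every point of `D`,
hence everywhere on `D`.
-/

open ContinuousLinearMap Filter Set Topology ComplexConjugate
open scoped InnerProductSpace

theorem ContinuousLinearMap.inner_eq_zero_of_apply_eq_smul_of_adjoint_apply_eq_smul
    {𝕜 E : Type*} [RCLike 𝕜] [NormedAddCommGroup E] [InnerProductSpace 𝕜 E] [CompleteSpace E]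
    {T : E →L[𝕜] E} {a b : 𝕜} {x y : E} (hx : T x = a • x) (hy : adjoint T y = conj b • y)
    (hab : a ≠ b) : ⟪y, x⟫_𝕜 = 0 := by
  have hpair : a * ⟪y, x⟫_𝕜 = b * ⟪y, x⟫_𝕜 := calc
    a * ⟪y, x⟫_𝕜 = ⟪y, T x⟫_𝕜 := by rw [hx, inner_smul_right]
    _ = ⟪adjoint T y, x⟫_𝕜 := (adjoint_inner_left T x y).symm
    _ = b * ⟪y, x⟫_𝕜 := by rw [hy, inner_smul_left, RCLike.conj_conj]
  exact (mul_left_inj' (sub_ne_zero.mpr hab)).mp (by linear_combination hpair)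

theorem ContinuousAt.eq_zero_of_eventually_eq_zero_nhdsNE
    {X Y : Type*} [TopologicalSpace X] [TopologicalSpace Y] [T2Space Y] [Zero Y]
    {h : X → Y} {x : X} [(𝓝[≠] x).NeBot] (hh : ContinuousAt h x)
    (hzero : ∀ᶠ w in 𝓝[≠] x, h w = 0) : h x = 0 :=
  ((hh.eventuallyEq_nhds_iff_eventuallyEq_nhdsNE continuousAt_const).mp hzero).eq_of_nhds

theorem AnalyticOnNhd.eventually_ne_nhdsNE_of_not_eqOn
    {𝕜 F : Type*} [NontriviallyNormedField 𝕜] [NormedAddCommGroup F] [NormedSpace 𝕜 F]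
    {f g : 𝕜 → F} {U : Set 𝕜} {z : 𝕜} (hf : AnalyticOnNhd 𝕜 f U) (hg : AnalyticOnNhd 𝕜 g U)
    (hU : IsPreconnected U) (hz : z ∈ U) (hfg : ¬ EqOn f g U) : ∀ᶠ w in 𝓝[≠] z, f w ≠ g w := by
  rw [← not_frequently]
  exact fun hfreq ↦ hfg (hf.eqOn_of_preconnected_of_frequently_eq hg hU hz hfreq)

theorem ContinuousOn.eqOn_zero_of_eq_zero_of_ne
    {Y : Type*} [TopologicalSpace Y] [T2Space Y] [Zero Y] {f g : ℂ → ℂ} {h : ℂ → Y}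
    {D : Set ℂ} (hD : IsOpen D) (hDconn : IsPreconnected D)
    (hf : DifferentiableOn ℂ f D) (hg : DifferentiableOn ℂ g D) (hfg : ¬ EqOn f g D)
    (hh : ContinuousOn h D) (hzero : ∀ v ∈ D, f v ≠ g v → h v = 0) : EqOn h 0 D := by
  intro v hv
  have hne : ∀ᶠ w in 𝓝[≠] v, f w ≠ g w :=
    (hf.analyticOnNhd hD).eventually_ne_nhdsNE_of_not_eqOn (hg.analyticOnNhd hD) hDconn hv hfg
  have hmem : ∀ᶠ w in 𝓝[≠] v, w ∈ D :=
    eventually_nhdsWithin_of_eventually_nhds (hD.eventually_mem hv)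
  refine (hh.continuousAt (hD.mem_nhds hv)).eq_zero_of_eventually_eq_zero_nhdsNE ?_
  filter_upwards [hne, hmem] with w hfgw hw using hzero w hw hfgw

/-- if `z_τ, z_μ` are holomorphic on an open connected `D` and not
identically equal, and `φ_τ(v)`, `φ*_μ(v)` are continuous eigenvector families for
`N_v = N₀ + vW` at `z_τ(v)` and for `N_v*` at `conj (z_μ(v))` respectively, then
`⟪φ*_μ(v), φ_τ(v)⟫ = 0` on `D`. -/
theorem eigenpaths_of_distinct_eigenvalues_orthogonal
    {H : Type*} [NormedAddCommGroup H] [InnerProductSpace ℂ H] [CompleteSpace H]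
    (N₀ W : H →L[ℂ] H) (D : Set ℂ) (hD : IsOpen D) (hDconn : IsConnected D)
    (zτ zμ : ℂ → ℂ) (hzτ : DifferentiableOn ℂ zτ D) (hzμ : DifferentiableOn ℂ zμ D)
    (hne : ¬ Set.EqOn zτ zμ D)
    (φτ φμs : ℂ → H) (hφτ : ContinuousOn φτ D) (hφμs : ContinuousOn φμs D)
    (heigτ : ∀ v ∈ D, (N₀ + v • W) (φτ v) = zτ v • φτ v)
    (heigμ : ∀ v ∈ D, adjoint (N₀ + v • W) (φμs v) = (starRingEnd ℂ) (zμ v) • φμs v) :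
    ∀ v ∈ D, ⟪φμs v, φτ v⟫_ℂ = 0 :=
  (hφμs.inner hφτ).eqOn_zero_of_eq_zero_of_ne hD hDconn.isPreconnected hzτ hzμ hne
    fun v hv hzv ↦ inner_eq_zero_of_apply_eq_smul_of_adjoint_apply_eq_smul
      (heigτ v hv) (heigμ v hv) hzv
end

section
/- For every integer k ≥ 1 the following are equivalent: (1) the vectors W φ^(j)(0) for 0 ≤ j ≤ k−2 are all orthogonal to ker(N₀* − conj(z₀)) (the eigenpath φ has order at least k at 0); (2) there exists ψ ∈ ker(N₀* − conj(z₀)) with ⟨ψ, φ(0)⟩ ≠ 0 such that ⟨ψ, W φ^(j)(0)⟩ = 0 for all 0 ≤ j ≤ k−2; (3) z^(j)(0) = 0 for j = 1, …, k−1; (4) (N₀ − z₀) φ^(j)(0) = −j W φ^(j−1)(0) for j = 1, …, k−1. -/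
/-!
Differentiating `(N₀ + v W) φ(v) = z(v) φ(v)` `j` times at `0` (Leibniz rule) gives
`(N₀ - z₀) φ⁽ʲ⁾ + j W φ⁽ʲ⁻¹⁾ = ∑_{i ≥ 1} C(j, i) z⁽ⁱ⁾ φ⁽ʲ⁻ⁱ⁾`. Pairing with an eigenvector `ψ`
of `N₀*` for `conj z₀` kills the first term, so once `z⁽ⁱ⁾(0) = 0` for `1 ≤ i < j` the pairing
reads `j ⟪ψ, W φ⁽ʲ⁻¹⁾⟫ = z⁽ʲ⁾(0) ⟪ψ, φ(0)⟫`; induction on `j` gives (2) ⇒ (3). When these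
`z⁽ⁱ⁾(0)` vanish the identity is (4) itself, and pairing (4) with any such `ψ` gives (1).
-/

open ContinuousLinearMap Filter Finset
open scoped InnerProductSpace Topology

section IteratedDeriv

variable {𝕜 : Type*} [NontriviallyNormedField 𝕜] {E F : Type*} [NormedAddCommGroup E]
  [NormedSpace 𝕜 E] [NormedAddCommGroup F] [NormedSpace 𝕜 F] {n : ℕ} {x : 𝕜}

theorem ContinuousLinearMap.iteratedDeriv_comp_left (L : E →L[𝕜] F) {f : 𝕜 → E}
    (hf : ContDiffAt 𝕜 n f x) :
    iteratedDeriv n (fun v => L (f v)) x = L (iteratedDeriv n f x) := by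
  simp only [iteratedDeriv_eq_iteratedFDeriv]
  rw [show (fun v => L (f v)) = L ∘ f from rfl, L.iteratedFDeriv_comp_left hf le_rfl]
  rfl

theorem iteratedDeriv_smul {𝔸 : Type*} [NormedRing 𝔸] [NormedAlgebra 𝕜 𝔸] [Module 𝔸 E]
    [IsBoundedSMul 𝔸 E] [IsScalarTower 𝕜 𝔸 E] {f : 𝕜 → 𝔸} {g : 𝕜 → E}
    (hf : ContDiffAt 𝕜 n f x) (hg : ContDiffAt 𝕜 n g x) :
    iteratedDeriv n (f • g) x = ∑ i ∈ range (n + 1),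
      n.choose i • iteratedDeriv i f x • iteratedDeriv (n - i) g x := by
  simpa only [iteratedDerivWithin_univ] using iteratedDerivWithin_smul (Set.mem_univ x)
    uniqueDiffOn_univ hf.contDiffWithinAt hg.contDiffWithinAt

theorem iteratedDeriv_id_smul_zero {g : 𝕜 → E} (hg : ContDiffAt 𝕜 n g 0) :
    iteratedDeriv n (fun v => v • g v) 0 = (n : 𝕜) • iteratedDeriv (n - 1) g 0 := by
  refine (iteratedDeriv_smul (f := fun v : 𝕜 => v) contDiffAt_id hg).trans ?_
  rcases n with _ | m
  · simp
  · rw [sum_eq_single 1]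
    · simp [iteratedDeriv_fun_id_zero, ← Nat.cast_smul_eq_nsmul 𝕜]
    · intro i _ hi
      simp [iteratedDeriv_fun_id_zero, hi]
    · simp

end IteratedDeriv

section Recursion

variable {𝕜 : Type*} [NontriviallyNormedField 𝕜] {E : Type*} [NormedAddCommGroup E]
  [NormedSpace 𝕜 E] {N₀ W : E →L[𝕜] E}

/-- `a j` and `p j` stand for `z⁽ʲ⁾(0)` and `φ⁽ʲ⁾(0)`, and `c` for `z(0)`, of an eigenpath
`(N₀ + v W) φ(v) = z(v) φ(v)`. -/
def SatisfiesEigenpathRecursion (N₀ W : E →L[𝕜] E) (c : 𝕜) (a : ℕ → 𝕜) (p : ℕ → E) : Prop :=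
  ∀ j : ℕ, (N₀ - c • 1) (p j) + (j : 𝕜) • W (p (j - 1)) =
    ∑ i ∈ range j, j.choose (i + 1) • a (i + 1) • p (j - (i + 1))

theorem eigenpath_iteratedDeriv_identity {z : 𝕜 → 𝕜} {φ : 𝕜 → E} {n : ℕ}
    (hz : ContDiffAt 𝕜 n z 0) (hφ : ContDiffAt 𝕜 n φ 0)
    (heig : ∀ᶠ v in 𝓝 0, (N₀ + v • W) (φ v) = z v • φ v) :
    (N₀ - z 0 • 1) (iteratedDeriv n φ 0) + (n : 𝕜) • W (iteratedDeriv (n - 1) φ 0) =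
      ∑ i ∈ range n, n.choose (i + 1) •
        iteratedDeriv (i + 1) z 0 • iteratedDeriv (n - (i + 1)) φ 0 := by
  have hWφ : ContDiffAt 𝕜 n (fun v => W (φ v)) 0 := W.contDiff.contDiffAt.comp 0 hφ
  have heig' : (fun v => N₀ (φ v) + v • W (φ v)) =ᶠ[𝓝 0] z • φ :=
    heig.mono fun v hv => by rw [Pi.smul_apply', ← hv, add_apply, smul_apply]
  have hderiv := heig'.iteratedDeriv_eq n
  rw [iteratedDeriv_fun_add (f := fun v => N₀ (φ v)) (g := fun v => v • W (φ v))
      (N₀.contDiff.contDiffAt.comp 0 hφ) (contDiffAt_id.smul hWφ),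
    N₀.iteratedDeriv_comp_left hφ, iteratedDeriv_id_smul_zero hWφ,
    W.iteratedDeriv_comp_left (hφ.of_le (by exact_mod_cast n.sub_le 1)),
    iteratedDeriv_smul hz hφ, sum_range_succ'] at hderiv
  simp only [Nat.choose_zero_right, iteratedDeriv_zero, Nat.sub_zero, one_smul] at hderiv
  rw [sub_apply, smul_apply, one_apply_eq_self]
  linear_combination (norm := module) hderiv

theorem satisfiesEigenpathRecursion_iteratedDeriv [CompleteSpace 𝕜] [CompleteSpace E]
    {z : 𝕜 → 𝕜} {φ : 𝕜 → E}
    (hz : AnalyticAt 𝕜 z 0) (hφ : AnalyticAt 𝕜 φ 0)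
    (heig : ∀ᶠ v in 𝓝 0, (N₀ + v • W) (φ v) = z v • φ v) :
    SatisfiesEigenpathRecursion N₀ W (z 0) (iteratedDeriv · z 0) (iteratedDeriv · φ 0) :=
  fun _ => eigenpath_iteratedDeriv_identity hz.contDiffAt hφ.contDiffAt heig

variable {c : 𝕜} {a : ℕ → 𝕜} {p : ℕ → E} {k : ℕ}

theorem SatisfiesEigenpathRecursion.sub_smul_one_apply_eq
    (hrec : SatisfiesEigenpathRecursion N₀ W c a p) (ha : ∀ j, 1 ≤ j → j < k → a j = 0)
    {j : ℕ} (hjk : j < k) : (N₀ - c • 1) (p j) = (-(j : 𝕜)) • W (p (j - 1)) := by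
  have h := hrec j
  rw [sum_eq_zero fun i hi => by rw [ha (i + 1) (by omega) (by grind)]; simp] at h
  rw [neg_smul]
  exact eq_neg_of_add_eq_zero_left h

end Recursion

section Pairing

variable {𝕜 H : Type*} [RCLike 𝕜] [NormedAddCommGroup H] [InnerProductSpace 𝕜 H]
  [CompleteSpace H] {N₀ W : H →L[𝕜] H} {c : 𝕜} {ψ : H} {a : ℕ → 𝕜} {p : ℕ → H} {k : ℕ}

theorem inner_sub_smul_one_apply_eq_zero (hψ : adjoint N₀ ψ = starRingEnd 𝕜 c • ψ) (x : H) :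
    ⟪ψ, (N₀ - c • 1) x⟫_𝕜 = 0 := by
  rw [sub_apply, inner_sub_right, ← adjoint_inner_left, hψ, smul_apply, one_apply_eq_self,
    inner_smul_left, inner_smul_right, RCLike.conj_conj, sub_self]

theorem SatisfiesEigenpathRecursion.eq_zero_of_inner_eq_zero
    (hrec : SatisfiesEigenpathRecursion N₀ W c a p)
    (hψ : adjoint N₀ ψ = starRingEnd 𝕜 c • ψ) (hψp : ⟪ψ, p 0⟫_𝕜 ≠ 0)
    (horth : ∀ j, j + 2 ≤ k → ⟪ψ, W (p j)⟫_𝕜 = 0) {j : ℕ} (hj : 1 ≤ j) (hjk : j < k) :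
    a j = 0 := by
  induction j using Nat.strong_induction_on with
  | _ j ih =>
    have hpair := congrArg (⟪ψ, ·⟫_𝕜) (hrec j)
    simp only [inner_add_right, inner_sub_smul_one_apply_eq_zero hψ, inner_smul_right, inner_sum,
      horth (j - 1) (by omega), ← Nat.cast_smul_eq_nsmul 𝕜] at hpair
    rw [sum_eq_single_of_mem (j - 1) (mem_range.mpr (by omega)) fun i hi hne => by
      rw [ih (i + 1) (by grind) (by omega) (by grind)]; simp] at hpair
    rw [Nat.sub_add_cancel hj, Nat.choose_self, Nat.sub_self] at hpair
    simpa [hψp] using hpair.symm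

theorem inner_apply_eq_zero_of_sub_smul_one_apply_eq (hψ : adjoint N₀ ψ = starRingEnd 𝕜 c • ψ)
    (h : ∀ j, 1 ≤ j → j < k → (N₀ - c • 1) (p j) = (-(j : 𝕜)) • W (p (j - 1)))
    {j : ℕ} (hjk : j + 2 ≤ k) : ⟪ψ, W (p j)⟫_𝕜 = 0 := by
  have hpair := congrArg (⟪ψ, ·⟫_𝕜) (h (j + 1) (by omega) (by omega))
  simp only [inner_sub_smul_one_apply_eq_zero hψ, inner_smul_right, add_tsub_cancel_right]
    at hpair
  exact (mul_eq_zero.mp hpair.symm).resolve_left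
    (neg_ne_zero.mpr (Nat.cast_ne_zero.mpr j.succ_ne_zero))

end Pairing

theorem eigenpath_order_at_least_tfae_general
    {H : Type*} [NormedAddCommGroup H] [InnerProductSpace ℂ H] [CompleteSpace H]
    (N₀ W : H →L[ℂ] H) (ρ : ℝ) (hρ : 0 < ρ)
    (z : ℂ → ℂ) (φ : ℂ → H)
    (hz : AnalyticOnNhd ℂ z (Metric.ball (0 : ℂ) ρ))
    (hφ : AnalyticOnNhd ℂ φ (Metric.ball (0 : ℂ) ρ))
    (heig : ∀ v ∈ Metric.ball (0 : ℂ) ρ, (N₀ + v • W) (φ v) = z v • φ v)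
    (z₀ : ℂ) (hz₀ : z₀ = z 0)
    (φs : H) (hφs : adjoint N₀ φs = (starRingEnd ℂ) z₀ • φs)
    (hφsφ : ⟪φs, φ 0⟫_ℂ ≠ 0)
    (k : ℕ) :
    [ -- (1) `W φ^(j)(0)`, `0 ≤ j ≤ k-2`, orthogonal to `ker (N₀* - conj z₀)`
      ∀ j : ℕ, j + 2 ≤ k → ∀ ψ : H, adjoint N₀ ψ = (starRingEnd ℂ) z₀ • ψ →
        ⟪ψ, W (iteratedDeriv j φ 0)⟫_ℂ = 0,
      -- (2) they are orthogonal to some adjoint eigenvector not orthogonal to `φ(0)`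
      ∃ ψ : H, adjoint N₀ ψ = (starRingEnd ℂ) z₀ • ψ ∧ ⟪ψ, φ 0⟫_ℂ ≠ 0 ∧
        ∀ j : ℕ, j + 2 ≤ k → ⟪ψ, W (iteratedDeriv j φ 0)⟫_ℂ = 0,
      -- (3) `z^(j)(0) = 0` for `j = 1, …, k-1`
      ∀ j : ℕ, 1 ≤ j → j < k → iteratedDeriv j z 0 = 0,
      -- (4) `(N₀ - z₀) φ^(j)(0) = -j W φ^(j-1)(0)` for `j = 1, …, k-1`
      ∀ j : ℕ, 1 ≤ j → j < k →
        (N₀ - z₀ • (1 : H →L[ℂ] H)) (iteratedDeriv j φ 0) =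
          (-(j : ℂ)) • W (iteratedDeriv (j - 1) φ 0) ].TFAE := by
  subst hz₀
  have hball : Metric.ball (0 : ℂ) ρ ∈ 𝓝 0 := Metric.ball_mem_nhds 0 hρ
  have hrec := satisfiesEigenpathRecursion_iteratedDeriv (hz 0 (mem_of_mem_nhds hball))
    (hφ 0 (mem_of_mem_nhds hball)) (eventually_of_mem hball heig)
  tfae_have 1 → 2 := fun h => ⟨φs, hφs, hφsφ, fun j hj => h j hj φs hφs⟩
  tfae_have 2 → 3 := fun ⟨ψ, hψ, hψφ, horth⟩ _ hj hjk =>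
    hrec.eq_zero_of_inner_eq_zero hψ (by rwa [iteratedDeriv_zero]) horth hj hjk
  tfae_have 3 → 4 := fun h _ _ hjk => hrec.sub_smul_one_apply_eq h hjk
  tfae_have 4 → 1 := fun h _ hj _ hψ => inner_apply_eq_zero_of_sub_smul_one_apply_eq hψ h hj
  tfae_finish

/-- equivalent characterisations of an eigenpath `φ` of `N_v = N₀ + vW`
having order at least `k` at `v = 0`. -/
theorem eigenpath_order_at_least_tfae
    {H : Type*} [NormedAddCommGroup H] [InnerProductSpace ℂ H] [CompleteSpace H]
    (N₀ W : H →L[ℂ] H) (ρ : ℝ) (hρ : 0 < ρ)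
    (z : ℂ → ℂ) (φ : ℂ → H)
    (hz : AnalyticOnNhd ℂ z (Metric.ball (0 : ℂ) ρ))
    (hφ : AnalyticOnNhd ℂ φ (Metric.ball (0 : ℂ) ρ))
    (heig : ∀ v ∈ Metric.ball (0 : ℂ) ρ, (N₀ + v • W) (φ v) = z v • φ v)
    (hφ0 : φ 0 ≠ 0)
    (z₀ : ℂ) (hz₀ : z₀ = z 0)
    (φs : H) (hφs : adjoint N₀ φs = (starRingEnd ℂ) z₀ • φs)
    (hφsφ : ⟪φs, φ 0⟫_ℂ ≠ 0)
    (k : ℕ) (hk : 1 ≤ k) :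
    [ -- (1) `W φ^(j)(0)`, `0 ≤ j ≤ k-2`, orthogonal to `ker (N₀* - conj z₀)`
      ∀ j : ℕ, j + 2 ≤ k → ∀ ψ : H, adjoint N₀ ψ = (starRingEnd ℂ) z₀ • ψ →
        ⟪ψ, W (iteratedDeriv j φ 0)⟫_ℂ = 0,
      -- (2) they are orthogonal to some adjoint eigenvector not orthogonal to `φ(0)`
      ∃ ψ : H, adjoint N₀ ψ = (starRingEnd ℂ) z₀ • ψ ∧ ⟪ψ, φ 0⟫_ℂ ≠ 0 ∧
        ∀ j : ℕ, j + 2 ≤ k → ⟪ψ, W (iteratedDeriv j φ 0)⟫_ℂ = 0,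
      -- (3) `z^(j)(0) = 0` for `j = 1, …, k-1`
      ∀ j : ℕ, 1 ≤ j → j < k → iteratedDeriv j z 0 = 0,
      -- (4) `(N₀ - z₀) φ^(j)(0) = -j W φ^(j-1)(0)` for `j = 1, …, k-1`
      ∀ j : ℕ, 1 ≤ j → j < k →
        (N₀ - z₀ • (1 : H →L[ℂ] H)) (iteratedDeriv j φ 0) =
          (-(j : ℂ)) • W (iteratedDeriv (j - 1) φ 0) ].TFAE :=
  eigenpath_order_at_least_tfae_general N₀ W ρ hρ z φ hz hφ heig z₀ hz₀ φs hφs hφsφ k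
end
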